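/- arXiv:1009.2375 — 4 statements merged into one kernel-verified Lean document; each statement's English description precedes it below -/
import Mathlib

section
/- For every family F ⊆ C([n],r)^d there is a monotone family F₀ ⊆ C([n],r)^d with |F₀| = |F| and |∂F₀| ≤ |∂F|. -/
open Finset

/-- The shadow of a `d`-dimensional uniform family: all tuples obtained from a tuple in `F`
by removing one element from each coordinate. -/
def multiShadow {α : Type*} [DecidableEq α] (d : ℕ) (F : Set (Fin d → Finset α)) :
    Set (Fin d → Finset α) :=
  {T | ∃ S ∈ F, ∃ x : Fin d → α, (∀ i, x i ∈ S i) ∧ ∀ i, T i = (S i).erase (x i)}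

/-- `C([n], r)`: the `r`-element subsets of `[n] = {1, …, n}`. -/
def uniformOn (n r : ℕ) : Set (Finset ℕ) := {A | A ⊆ Finset.Icc 1 n ∧ A.card = r}

/-- `G` is an initial segment of the colexicographic order on `C([n], r)`. -/
def IsColexInitSeg (n r : ℕ) (G : Set (Finset ℕ)) : Prop :=
  G ⊆ uniformOn n r ∧
    ∀ A ∈ G, ∀ B ∈ uniformOn n r, toColex B ≤ toColex A → B ∈ G

/-- A `d`-dimensional family is monotone if every 1-dimensional section (obtained by fixing
all but one of the coordinates) is an initial segment of the colexicographic order. -/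
def IsMonotoneFamily (n r d : ℕ) (F : Set (Fin d → Finset ℕ)) : Prop :=
  ∀ (j : Fin d) (S : Fin d → Finset ℕ),
    IsColexInitSeg n r {A | Function.update S j A ∈ F}


/-!
Compressing every section of `F` along a coordinate `j` to the colex initial segment of the
same size keeps `|F|`. It does not increase `|∂F|` either: the section of `∂F` through `t` is the
shadow of the union `W` of the `j`-coordinates of those members of `F` whose other coordinates
cover `t`, after compression `W` lies inside the initial segment of size `|W|`, and
Kruskal–Katona bounds the shadow of that segment by `|∂W|`. A compression that changes
anything strictly lowers the total colex rank of all coordinates of all members, so a family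
of least total rank among those at least as good as `F` is monotone.
-/

open Finset.Colex
open scoped FinsetFamily

lemma sum_lt_sum_of_card_eq_of_forall_sdiff_lt {ι : Type*} [DecidableEq ι] {s t : Finset ι}
    {f : ι → ℕ} (hcard : #s = #t) (hne : s ≠ t) (h : ∀ a ∈ s \ t, ∀ b ∈ t \ s, f a < f b) :
    ∑ a ∈ s, f a < ∑ b ∈ t, f b := by
  have hcard' : #(s \ t) = #(t \ s) := card_sdiff_eq_card_sdiff_iff.2 hcard
  have hts : (t \ s).Nonempty := by
    rw [nonempty_iff_ne_empty, Ne, sdiff_eq_empty_iff_subset]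
    exact fun hts => hne (eq_of_subset_of_card_le hts hcard.le).symm
  have hst : (s \ t).Nonempty := by
    rw [← card_pos, hcard', card_pos]; exact hts
  rw [← sum_sdiff_lt_sum_sdiff]
  calc ∑ a ∈ s \ t, f a < ∑ _a ∈ s \ t, (t \ s).inf' hts f :=
        sum_lt_sum_of_nonempty hst fun a ha => (lt_inf'_iff hts).2 (h a ha)
    _ = #(t \ s) • (t \ s).inf' hts f := by rw [sum_const, hcard']
    _ ≤ ∑ b ∈ t \ s, f b := card_nsmul_le_sum _ _ _ fun b hb => inf'_le f hb

lemma shadow_image_image {α β : Type*} [DecidableEq α] [DecidableEq β] {f : α → β}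
    (hf : Function.Injective f) (𝒜 : Finset (Finset α)) :
    ∂ (𝒜.image (image f)) = (∂ 𝒜).image (image f) := by
  ext t
  simp only [mem_shadow_iff, mem_image]
  constructor
  · rintro ⟨-, ⟨s, hs, rfl⟩, b, hb, rfl⟩
    obtain ⟨a, ha, rfl⟩ := mem_image.1 hb
    exact ⟨s.erase a, ⟨s, hs, a, ha, rfl⟩, image_erase hf s a⟩
  · rintro ⟨-, ⟨s, hs, a, ha, rfl⟩, rfl⟩
    exact ⟨s.image f, ⟨s, hs, rfl⟩, f a, mem_image_of_mem f ha, (image_erase hf s a).symm⟩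

section ColexSegment

variable {n r k : ℕ} {A B : Finset ℕ} {ℬ : Finset (Finset ℕ)}

def uniformFinset (n r : ℕ) : Finset (Finset ℕ) := (Icc 1 n).powersetCard r

lemma mem_uniformFinset : A ∈ uniformFinset n r ↔ A ∈ uniformOn n r := mem_powersetCard

def colexRank (n r : ℕ) (A : Finset ℕ) : ℕ := #{B ∈ uniformFinset n r | toColex B ≤ toColex A}

lemma colexRank_mono (h : toColex A ≤ toColex B) : colexRank n r A ≤ colexRank n r B :=
  card_le_card <| monotone_filter_right _ fun _ _ hC => hC.trans h

lemma colexRank_lt_colexRank (hB : B ∈ uniformFinset n r) (h : toColex A < toColex B) :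
    colexRank n r A < colexRank n r B := by
  refine card_lt_card ⟨monotone_filter_right _ fun _ _ hC => hC.trans h.le, fun hsub => ?_⟩
  have := hsub (mem_filter.2 ⟨hB, le_rfl⟩)
  exact (mem_filter.1 this).2.not_gt h

lemma colexRank_injOn : Set.InjOn (colexRank n r) (uniformFinset n r) := by
  intro A hA B hB hAB
  by_contra hne
  rcases lt_or_gt_of_ne (toColex_inj.not.2 hne) with h | h
  · exact (colexRank_lt_colexRank hB h).ne hAB
  · exact (colexRank_lt_colexRank hA h).ne' hAB

lemma image_colexRank : (uniformFinset n r).image (colexRank n r) = Icc 1 #(uniformFinset n r) := by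
  refine eq_of_subset_of_card_le (fun x hx => ?_) ?_
  · obtain ⟨A, hA, rfl⟩ := mem_image.1 hx
    exact mem_Icc.2 ⟨card_pos.2 ⟨A, mem_filter.2 ⟨hA, le_rfl⟩⟩, card_le_card (filter_subset _ _)⟩
  · rw [Nat.card_Icc, card_image_of_injOn colexRank_injOn]; omega

/-- The first `k` sets of `C([n], r)` in colex order (all of them if `k` exceeds their number). -/
def colexSeg (n r k : ℕ) : Finset (Finset ℕ) := {A ∈ uniformFinset n r | colexRank n r A ≤ k}

lemma colexSeg_subset : colexSeg n r k ⊆ uniformFinset n r := filter_subset _ _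

lemma colexSeg_mono {k k' : ℕ} (h : k ≤ k') : colexSeg n r k ⊆ colexSeg n r k' :=
  monotone_filter_right _ fun _ _ hA => hA.trans h

lemma card_colexSeg (hk : k ≤ #(uniformFinset n r)) : #(colexSeg n r k) = k := by
  have himage : (colexSeg n r k).image (colexRank n r) = Icc 1 k := by
    rw [colexSeg, ← filter_image (p := (· ≤ k)), image_colexRank]
    ext x; simp only [mem_filter, mem_Icc]; omega
  rw [← card_image_of_injOn (colexRank_injOn.mono colexSeg_subset), himage, Nat.card_Icc]
  omega

lemma colexSeg_zero : colexSeg n r 0 = ∅ :=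
  card_eq_zero.1 (card_colexSeg (Nat.zero_le _))

lemma isColexInitSeg_colexSeg : IsColexInitSeg n r ↑(colexSeg n r k) := by
  refine ⟨fun A hA => mem_uniformFinset.1 (colexSeg_subset hA), fun A hA B hB hBA => ?_⟩
  have hA := mem_filter.1 (mem_coe.1 hA)
  exact mem_filter.2 ⟨mem_uniformFinset.2 hB, (colexRank_mono hBA).trans hA.2⟩

lemma sum_colexSeg_lt_sum {ψ : Finset ℕ → ℕ} (hB : ℬ ⊆ uniformFinset n r)
    (hψ : ∀ A ∈ uniformFinset n r, ∀ B, toColex B < toColex A → ψ B < ψ A)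
    (hne : colexSeg n r #ℬ ≠ ℬ) :
    ∑ A ∈ colexSeg n r #ℬ, ψ A < ∑ A ∈ ℬ, ψ A := by
  refine sum_lt_sum_of_card_eq_of_forall_sdiff_lt (card_colexSeg (card_le_card hB)) hne
    fun A hA B hB' => hψ B (hB (mem_sdiff.1 hB').1) A (lt_of_not_ge fun hBA => ?_)
  have hA := mem_filter.1 (mem_sdiff.1 hA).1
  exact (mem_sdiff.1 hB').2 (mem_filter.2 ⟨hB (mem_sdiff.1 hB').1, (colexRank_mono hBA).trans hA.2⟩)

lemma sum_colexSeg_le_sum {ψ : Finset ℕ → ℕ} (hB : ℬ ⊆ uniformFinset n r)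
    (hψ : ∀ A ∈ uniformFinset n r, ∀ B, toColex B < toColex A → ψ B < ψ A) :
    ∑ A ∈ colexSeg n r #ℬ, ψ A ≤ ∑ A ∈ ℬ, ψ A := by
  rcases eq_or_ne (colexSeg n r #ℬ) ℬ with h | h
  · rw [h]
  · exact (sum_colexSeg_lt_sum hB hψ h).le

end ColexSegment

section KruskalKatona

variable {n r : ℕ} {ℬ : Finset (Finset ℕ)}

lemma uniformFinset_eq_image :
    uniformFinset n r = (powersetCard r univ).image (image fun i : Fin n => (i : ℕ) + 1) := by
  have hIcc : Icc 1 n = univ.image fun i : Fin n => (i : ℕ) + 1 := by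
    ext x
    simp only [mem_Icc, mem_image, mem_univ, true_and]
    exact ⟨fun h => ⟨⟨x - 1, by omega⟩, by simp only; omega⟩, by rintro ⟨i, rfl⟩; omega⟩
  ext A
  simp only [uniformFinset, mem_powersetCard, hIcc, subset_image_iff, mem_image, subset_univ,
    true_and]
  constructor
  · rintro ⟨⟨a, rfl⟩, rfl⟩
    exact ⟨a, (card_image_of_injective _ fun i i' h => Fin.ext (by omega)).symm, rfl⟩
  · rintro ⟨a, rfl, rfl⟩
    exact ⟨⟨a, rfl⟩, card_image_of_injective _ fun i i' h => Fin.ext (by omega)⟩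

/-- Transported from `Finset.kruskal_katona` on `Fin n` along `i ↦ i + 1`, which preserves
colex. -/
lemma card_shadow_colexSeg_le (hℬ : ℬ ⊆ uniformFinset n r) :
    #(∂ (colexSeg n r #ℬ)) ≤ #(∂ ℬ) := by
  set e : Fin n → ℕ := fun i => (i : ℕ) + 1
  have he : StrictMono e := fun i i' h => Nat.succ_lt_succ h
  have hinj : Function.Injective (image e) := image_injective he.injective
  obtain ⟨𝒜, h𝒜, rfl⟩ := subset_image_iff.1 (uniformFinset_eq_image ▸ hℬ)
  obtain ⟨𝒞, h𝒞, h𝒞eq⟩ := subset_image_iff.1 <| (colexSeg_subset (n := n) (r := r)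
    (k := #(𝒜.image (image e)))).trans uniformFinset_eq_image.le
  have hsized : ∀ {𝒳 : Finset (Finset (Fin n))}, 𝒳 ⊆ powersetCard r univ →
      (𝒳 : Set (Finset (Fin n))).Sized r := fun h𝒳 a ha => (mem_powersetCard.1 (h𝒳 ha)).2
  have hinit : IsInitSeg 𝒞 r := by
    refine ⟨hsized h𝒞, fun s t hs ⟨hts, ht⟩ => ?_⟩
    have hsC : image e s ∈ colexSeg n r #(𝒜.image (image e)) :=
      h𝒞eq ▸ mem_image_of_mem _ hs
    have htU : image e t ∈ uniformOn n r := by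
      rw [← mem_uniformFinset, uniformFinset_eq_image]
      exact mem_image_of_mem _ (mem_powersetCard.2 ⟨subset_univ t, ht⟩)
    have := isColexInitSeg_colexSeg.2 _ hsC _ htU ((toColex_image_lt_toColex_image he).2 hts).le
    rw [← h𝒞eq, mem_coe, hinj.mem_finset_image] at this
    exact this
  have hcard : #𝒞 = #𝒜 := by
    rw [← card_image_of_injective 𝒞 hinj, h𝒞eq, card_colexSeg, card_image_of_injective 𝒜 hinj]
    exact card_le_card hℬ
  rw [← h𝒞eq, shadow_image_image he.injective, shadow_image_image he.injective,
    card_image_of_injective _ hinj, card_image_of_injective _ hinj]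
  exact kruskal_katona (hsized h𝒜) hcard.le hinit

end KruskalKatona

section Sections

open Function

variable {ι α : Type*} [Fintype ι] [DecidableEq ι] [DecidableEq α] {j : ι} {t : ι → α}
  {F : Finset (ι → α)} {A : α}

/-- The 1-dimensional section of `F` along coordinate `j` through `t`; it ignores `t j`. -/
def sectionAlong (j : ι) (t : ι → α) (F : Finset (ι → α)) : Finset α :=
  (F.image (· j)).filter fun A => update t j A ∈ F

@[simp] lemma mem_sectionAlong : A ∈ sectionAlong j t F ↔ update t j A ∈ F :=
  ⟨fun h => (mem_filter.1 h).2, fun h => mem_filter.2 ⟨mem_image.2 ⟨_, h, update_self ..⟩, h⟩⟩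

@[simp] lemma sectionAlong_update (B : α) :
    sectionAlong j (update t j B) F = sectionAlong j t F := by
  ext; simp

lemma sum_eq_sum_sum_sectionAlong {M : Type*} [AddCommMonoid M] (j : ι) (a : α)
    {V : Finset (ι → α)} (hFV : F ⊆ V) (φ : (ι → α) → M) :
    ∑ S ∈ F, φ S = ∑ t ∈ V.image (update · j a), ∑ A ∈ sectionAlong j t F, φ (update t j A) := by
  rw [← sum_fiberwise_of_maps_to fun S hS => mem_image_of_mem (update · j a) (hFV hS)]
  refine sum_congr rfl fun t ht => ?_
  obtain ⟨t₀, -, rfl⟩ := mem_image.1 ht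
  have hfiber : {S ∈ F | update S j a = update t₀ j a} =
      (sectionAlong j (update t₀ j a) F).image (update (update t₀ j a) j) := by
    ext S
    simp only [mem_filter, mem_image, mem_sectionAlong, update_idem]
    constructor
    · rintro ⟨hS, hSt⟩
      have hS' : update t₀ j (S j) = S := by
        rw [← update_idem a (S j) t₀, ← hSt, update_idem, update_eq_self]
      exact ⟨S j, by rwa [hS'], hS'⟩
    · rintro ⟨A, hA, rfl⟩
      exact ⟨hA, update_idem ..⟩
  rw [hfiber, sum_image fun _ _ _ _ h => update_injective _ _ h]

lemma card_eq_sum_card_sectionAlong (j : ι) (a : α) {V : Finset (ι → α)} (hFV : F ⊆ V) :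
    #F = ∑ t ∈ V.image (update · j a), #(sectionAlong j t F) := by
  simpa only [sum_const, smul_eq_mul, mul_one] using
    sum_eq_sum_sum_sectionAlong j a hFV fun _ => (1 : ℕ)

end Sections

section MultiShadow

open Function

variable {ι β : Type*} [Fintype ι] [DecidableEq ι] [DecidableEq β] {j : ι}
  {t S : ι → Finset β} {F : Finset (ι → Finset β)}

def multiShadowFinset (F : Finset (ι → Finset β)) : Finset (ι → Finset β) :=
  F.biUnion fun S => Fintype.piFinset fun i => ∂ {S i}

lemma mem_shadow_singleton_iff {s t : Finset β} : t ∈ ∂ {s} ↔ ∃ a ∈ s, s.erase a = t := by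
  simp [mem_shadow_iff]

lemma mem_multiShadowFinset {T : ι → Finset β} :
    T ∈ multiShadowFinset F ↔ ∃ S ∈ F, ∀ i, T i ∈ ∂ {S i} := by
  simp only [multiShadowFinset, mem_biUnion, Fintype.mem_piFinset]

lemma coe_multiShadowFinset {d : ℕ} (F : Finset (Fin d → Finset β)) :
    ↑(multiShadowFinset F) = multiShadow d (F : Set (Fin d → Finset β)) := by
  ext T
  simp only [mem_coe, mem_multiShadowFinset, mem_shadow_singleton_iff, multiShadow,
    Set.mem_ofPred_eq]
  constructor
  · rintro ⟨S, hS, hT⟩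
    choose x hx hxT using hT
    exact ⟨S, hS, x, hx, fun i => (hxT i).symm⟩
  · rintro ⟨S, hS, x, hx, hT⟩
    exact ⟨S, hS, fun i => ⟨x i, hx i, (hT i).symm⟩⟩

def coverSection (j : ι) (t : ι → Finset β) (F : Finset (ι → Finset β)) : Finset (Finset β) :=
  {S ∈ F | ∀ i ≠ j, t i ∈ ∂ {S i}}.image (· j)

lemma sectionAlong_multiShadowFinset :
    sectionAlong j t (multiShadowFinset F) = ∂ (coverSection j t F) := by
  ext B
  have hshadow : B ∈ ∂ (coverSection j t F) ↔ ∃ A ∈ coverSection j t F, B ∈ ∂ {A} := by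
    simp only [mem_shadow_iff, mem_singleton, exists_eq_left]
  rw [hshadow]
  simp only [mem_sectionAlong, mem_multiShadowFinset, forall_update_iff, coverSection,
    mem_image, mem_filter]
  constructor
  · rintro ⟨S, hS, hB, ht⟩
    exact ⟨S j, ⟨S, ⟨hS, ht⟩, rfl⟩, hB⟩
  · rintro ⟨-, ⟨S, ⟨hS, ht⟩, rfl⟩, hB⟩
    exact ⟨S, hS, hB, ht⟩

lemma sectionAlong_subset_coverSection (h : ∀ i ≠ j, t i ∈ ∂ {S i}) :
    sectionAlong j S F ⊆ coverSection j t F := fun A hA =>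
  mem_image.2 ⟨update S j A, mem_filter.2 ⟨mem_sectionAlong.1 hA, fun i hi => by
    rw [update_of_ne hi]; exact h i hi⟩, update_self ..⟩

end MultiShadow

section Compression

open Function

variable {ι : Type*} [Fintype ι] [DecidableEq ι] {n r : ℕ} {j : ι} {t : ι → Finset ℕ}
  {F : Finset (ι → Finset ℕ)}

def uniformCube (n r : ℕ) (ι : Type*) [Fintype ι] [DecidableEq ι] : Finset (ι → Finset ℕ) :=
  Fintype.piFinset fun _ => uniformFinset n r

/-- Replace every section of `F` along `j` by the colex initial segment of the same size. -/
def colexCompress (n r : ℕ) (j : ι) (F : Finset (ι → Finset ℕ)) : Finset (ι → Finset ℕ) :=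
  {S ∈ uniformCube n r ι | S j ∈ colexSeg n r #(sectionAlong j S F)}

lemma colexCompress_subset : colexCompress n r j F ⊆ uniformCube n r ι := filter_subset _ _

lemma sectionAlong_subset_uniformFinset (hF : F ⊆ uniformCube n r ι) :
    sectionAlong j t F ⊆ uniformFinset n r := fun A hA => by
  simpa using Fintype.mem_piFinset.1 (hF (mem_sectionAlong.1 hA)) j

lemma coverSection_subset_uniformFinset (hF : F ⊆ uniformCube n r ι) :
    coverSection j t F ⊆ uniformFinset n r := fun A hA => by
  obtain ⟨S, hS, rfl⟩ := mem_image.1 hA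
  exact Fintype.mem_piFinset.1 (hF (mem_filter.1 hS).1) j

lemma sectionAlong_colexCompress (hF : F ⊆ uniformCube n r ι) (t : ι → Finset ℕ) :
    sectionAlong j t (colexCompress n r j F) = colexSeg n r #(sectionAlong j t F) := by
  ext A
  simp only [mem_sectionAlong, colexCompress, uniformCube, mem_filter, Fintype.mem_piFinset,
    forall_update_iff, update_self, sectionAlong_update]
  by_cases ht : ∀ i ≠ j, t i ∈ uniformFinset n r
  · exact ⟨fun h => h.2, fun h => ⟨⟨colexSeg_subset h, ht⟩, h⟩⟩
  · have hempty : sectionAlong j t F = ∅ := eq_empty_of_forall_notMem fun B hB => ht fun i hi => by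
      simpa [update_of_ne hi] using Fintype.mem_piFinset.1 (hF (mem_sectionAlong.1 hB)) i
    simp [hempty, colexSeg_zero]

lemma card_colexCompress (hF : F ⊆ uniformCube n r ι) : #(colexCompress n r j F) = #F := by
  rw [card_eq_sum_card_sectionAlong j ∅ colexCompress_subset, card_eq_sum_card_sectionAlong j ∅ hF]
  refine sum_congr rfl fun t _ => ?_
  rw [sectionAlong_colexCompress hF,
    card_colexSeg (card_le_card (sectionAlong_subset_uniformFinset hF))]

lemma coverSection_colexCompress_subset :
    coverSection j t (colexCompress n r j F) ⊆ colexSeg n r #(coverSection j t F) := by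
  intro A hA
  obtain ⟨S, hS, rfl⟩ := mem_image.1 hA
  obtain ⟨hSF, hcover⟩ := mem_filter.1 hS
  exact colexSeg_mono (card_le_card (sectionAlong_subset_coverSection hcover)) (mem_filter.1 hSF).2

lemma card_multiShadowFinset_colexCompress_le (hF : F ⊆ uniformCube n r ι) :
    #(multiShadowFinset (colexCompress n r j F)) ≤ #(multiShadowFinset F) := by
  rw [card_eq_sum_card_sectionAlong j ∅ (subset_union_left (s₂ := multiShadowFinset F)),
    card_eq_sum_card_sectionAlong j ∅ subset_union_right]
  refine sum_le_sum fun t _ => ?_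
  rw [sectionAlong_multiShadowFinset, sectionAlong_multiShadowFinset]
  calc #(∂ (coverSection j t (colexCompress n r j F)))
      ≤ #(∂ (colexSeg n r #(coverSection j t F))) :=
        card_le_card (shadow_mono coverSection_colexCompress_subset)
    _ ≤ #(∂ (coverSection j t F)) := card_shadow_colexSeg_le (coverSection_subset_uniformFinset hF)

def colexWeight (n r : ℕ) (F : Finset (ι → Finset ℕ)) : ℕ := ∑ S ∈ F, ∑ i, colexRank n r (S i)

lemma colexWeight_colexCompress_lt (hF : F ⊆ uniformCube n r ι)
    (hne : colexSeg n r #(sectionAlong j t F) ≠ sectionAlong j t F) :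
    colexWeight n r (colexCompress n r j F) < colexWeight n r F := by
  have hψ (t' : ι → Finset ℕ) : ∀ A ∈ uniformFinset n r, ∀ B, toColex B < toColex A →
      ∑ i, colexRank n r (update t' j B i) < ∑ i, colexRank n r (update t' j A i) := by
    intro A hA B hBA
    simp only [apply_update (fun _ => colexRank n r), sum_update_of_mem (mem_univ j)]
    exact Nat.add_lt_add_right (colexRank_lt_colexRank hA hBA) _
  obtain ⟨A, hA⟩ : (sectionAlong j t F).Nonempty := by
    rw [nonempty_iff_ne_empty]
    rintro hempty
    rw [hempty, card_empty, colexSeg_zero] at hne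
    exact hne rfl
  rw [colexWeight, colexWeight, sum_eq_sum_sum_sectionAlong j ∅ colexCompress_subset,
    sum_eq_sum_sum_sectionAlong j ∅ hF]
  refine sum_lt_sum (fun t' _ => ?_) ⟨update t j ∅, ?_, ?_⟩
  · rw [sectionAlong_colexCompress hF]
    exact sum_colexSeg_le_sum (sectionAlong_subset_uniformFinset hF) (hψ t')
  · exact mem_image.2 ⟨update t j A, hF (mem_sectionAlong.1 hA), update_idem ..⟩
  · rw [sectionAlong_colexCompress hF, sectionAlong_update]
    exact sum_colexSeg_lt_sum (sectionAlong_subset_uniformFinset hF) (hψ _) hne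

end Compression

lemma exists_isMonotoneFamily {n r d : ℕ} {F : Finset (Fin d → Finset ℕ)}
    (hF : F ⊆ uniformCube n r (Fin d)) :
    ∃ G ⊆ uniformCube n r (Fin d), IsMonotoneFamily n r d ↑G ∧ #G = #F ∧
      #(multiShadowFinset G) ≤ #(multiShadowFinset F) := by
  obtain ⟨G, ⟨hGU, hGcard, hGshadow⟩, hmin⟩ := (measure (colexWeight n r)).wf.has_min
    {G | G ⊆ uniformCube n r (Fin d) ∧ #G = #F ∧
      #(multiShadowFinset G) ≤ #(multiShadowFinset F)} ⟨F, hF, rfl, le_rfl⟩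
  refine ⟨G, hGU, fun j t => ?_, hGcard, hGshadow⟩
  have hseg : colexSeg n r #(sectionAlong j t G) = sectionAlong j t G := by
    by_contra hne
    exact hmin _ ⟨colexCompress_subset, (card_colexCompress hGU).trans hGcard,
      (card_multiShadowFinset_colexCompress_le hGU).trans hGshadow⟩
      (colexWeight_colexCompress_lt hGU hne)
  have hsection : {A | Function.update t j A ∈ (G : Set (Fin d → Finset ℕ))} =
      ↑(sectionAlong j t G) := by
    ext; simp
  rw [hsection, ← hseg]
  exact isColexInitSeg_colexSeg

theorem stmt2_general (n r d : ℕ)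
    (F : Set (Fin d → Finset ℕ)) (hF : ∀ S ∈ F, ∀ i, S i ∈ uniformOn n r) :
    ∃ F₀ : Set (Fin d → Finset ℕ), (∀ S ∈ F₀, ∀ i, S i ∈ uniformOn n r) ∧
      IsMonotoneFamily n r d F₀ ∧ F₀.ncard = F.ncard ∧
      (multiShadow d F₀).ncard ≤ (multiShadow d F).ncard := by
  have hFU : F ⊆ ↑(uniformCube n r (Fin d)) := fun S hS =>
    Fintype.mem_piFinset.2 fun i => mem_uniformFinset.2 (hF S hS i)
  lift F to Finset (Fin d → Finset ℕ) using (finite_toSet _).subset hFU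
  obtain ⟨G, hGU, hmono, hcard, hshadow⟩ := exists_isMonotoneFamily (coe_subset.1 hFU)
  refine ⟨G, fun S hS i => mem_uniformFinset.1 (Fintype.mem_piFinset.1 (hGU hS) i), hmono, ?_, ?_⟩
  · rwa [Set.ncard_coe_finset, Set.ncard_coe_finset]
  · rwa [← coe_multiShadowFinset, ← coe_multiShadowFinset, Set.ncard_coe_finset,
      Set.ncard_coe_finset]

theorem stmt2 (n r d : ℕ) (hr : 1 ≤ r) (hd : 1 ≤ d)
    (F : Set (Fin d → Finset ℕ)) (hF : ∀ S ∈ F, ∀ i, S i ∈ uniformOn n r) :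
    ∃ F₀ : Set (Fin d → Finset ℕ), (∀ S ∈ F₀, ∀ i, S i ∈ uniformOn n r) ∧
      IsMonotoneFamily n r d F₀ ∧ F₀.ncard = F.ncard ∧
      (multiShadow d F₀).ncard ≤ (multiShadow d F).ncard :=
  stmt2_general n r d F hF
end

section
/- If F ⊆ C([n],r)^d is a monotone family with r ≥ 1, then its shadow ∂F ⊆ C([n],r−1)^d is also a monotone family. -/
open Finset

/-!
Fix a coordinate `j` and a tuple `T = (S₁ ∖ {x₁}, …, S_d ∖ {x_d})` of the shadow. If `B` is
colex-below `T j = S_j ∖ {x_j}`, then `B < S_j` and `|B| < |S_j|`, so adding to `B` the least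
element `b` of `S_j ∖ B` gives a set `B ∪ {b}` still colex-below `S_j`. By monotonicity of
`F`, replacing `S_j` by `B ∪ {b}` stays in `F`, and removing `b` there puts `T` with `T j := B`
in the shadow.
-/

namespace Finset.Colex

variable {α : Type*} [LinearOrder α] {s t : Finset α}

theorem exists_insert_le_of_lt_of_card_lt (hst : toColex s < toColex t) (hcard : #s < #t) :
    ∃ b ∈ t \ s, toColex (insert b s) ≤ toColex t := by
  have hcard' : #(s \ t) < #(t \ s) := card_sdiff_lt_card_sdiff_iff.2 hcard
  have hts : (t \ s).Nonempty := card_pos.1 (Nat.zero_lt_of_lt hcard')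
  obtain ⟨w, hwt, hws, hw⟩ := toColex_lt_toColex_iff_exists_forall_lt.1 hst
  set b := (t \ s).min' hts
  have hb : b ∈ t \ s := min'_mem _ _
  refine ⟨b, hb, toColex_le_toColex.2 fun a has hat => ?_⟩
  have has' : a ∈ s :=
    (mem_insert.1 has).resolve_left (by rintro rfl; exact hat (mem_sdiff.1 hb).1)
  have haw : a < w := hw a has' hat
  by_cases hwb : w = b
  · -- `t \ s` is strictly larger than the nonempty `s \ t`, so it has an element other than `b`
    obtain ⟨c, hc, hcb⟩ : ∃ c ∈ t \ s, c ≠ b :=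
      exists_mem_ne (Nat.lt_of_le_of_lt (card_pos.2 ⟨a, mem_sdiff.2 ⟨has', hat⟩⟩) hcard') b
    have hbc : b ≤ c := min'_le _ _ hc
    rw [mem_sdiff] at hc
    exact ⟨c, hc.1, by simp [hcb, hc.2], (haw.trans_le (hwb.trans_le hbc)).le⟩
  · exact ⟨w, hwt, by simp [hwb, hws], haw.le⟩

end Finset.Colex

section

variable {n r d : ℕ} {A : Finset ℕ} {F : Set (Fin d → Finset ℕ)}

lemma erase_mem_uniformOn {a : ℕ} (hA : A ∈ uniformOn n r) (ha : a ∈ A) :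
    A.erase a ∈ uniformOn n (r - 1) :=
  ⟨(erase_subset a A).trans hA.1, by rw [card_erase_of_mem ha, hA.2]⟩

lemma insert_mem_uniformOn {b : ℕ} (hA : A ∈ uniformOn n r) (hb : b ∈ Icc 1 n)
    (hbA : b ∉ A) : insert b A ∈ uniformOn n (r + 1) :=
  ⟨insert_subset hb hA.1, by rw [card_insert_of_notMem hbA, hA.2]⟩

lemma IsMonotoneFamily.update_mem (hmono : IsMonotoneFamily n r d F) {S : Fin d → Finset ℕ}
    (hS : S ∈ F) {j : Fin d} (hA : A ∈ uniformOn n r) (hAS : toColex A ≤ toColex (S j)) :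
    Function.update S j A ∈ F :=
  (hmono j S).2 (S j) (by simpa using hS) A hA hAS

lemma apply_mem_uniformOn_of_mem_multiShadow (hF : ∀ S ∈ F, ∀ i, S i ∈ uniformOn n r)
    {T : Fin d → Finset ℕ} (hT : T ∈ multiShadow d F) (i : Fin d) :
    T i ∈ uniformOn n (r - 1) := by
  obtain ⟨S, hS, x, hx, hTS⟩ := hT
  rw [hTS i]
  exact erase_mem_uniformOn (hF S hS i) (hx i)

lemma update_mem_multiShadow_of_toColex_le (hF : ∀ S ∈ F, ∀ i, S i ∈ uniformOn n r)
    (hmono : IsMonotoneFamily n r d F) {T : Fin d → Finset ℕ} (hT : T ∈ multiShadow d F)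
    {j : Fin d} {B : Finset ℕ} (hB : B ∈ uniformOn n (r - 1))
    (hBT : toColex B ≤ toColex (T j)) : Function.update T j B ∈ multiShadow d F := by
  obtain ⟨S, hS, x, hx, hTS⟩ := hT
  obtain ⟨hSsub, hScard⟩ := hF S hS j
  have hr : 1 ≤ r := hScard ▸ card_pos.2 ⟨x j, hx j⟩
  have hBS : toColex B < toColex (S j) :=
    hBT.trans_lt (hTS j ▸ Colex.toColex_lt_toColex_of_ssubset (erase_ssubset (hx j)))
  obtain ⟨b, hb, hbB⟩ :=
    Colex.exists_insert_le_of_lt_of_card_lt hBS (by rw [hB.2, hScard]; omega)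
  rw [mem_sdiff] at hb
  have hC : insert b B ∈ uniformOn n r :=
    Nat.sub_add_cancel hr ▸ insert_mem_uniformOn hB (hSsub hb.1) hb.2
  refine ⟨Function.update S j (insert b B), hmono.update_mem hS hC hbB, Function.update x j b,
    fun i => ?_, fun i => ?_⟩
  · rcases eq_or_ne i j with rfl | hij
    · simp
    · simpa [hij] using hx i
  · rcases eq_or_ne i j with rfl | hij
    · simp [erase_insert hb.2]
    · simpa [hij] using hTS i

end

theorem stmt4_general (n r d : ℕ)
    (F : Set (Fin d → Finset ℕ)) (hF : ∀ S ∈ F, ∀ i, S i ∈ uniformOn n r)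
    (hmono : IsMonotoneFamily n r d F) :
    IsMonotoneFamily n (r - 1) d (multiShadow d F) := by
  intro j T
  refine ⟨fun A hA => by simpa using apply_mem_uniformOn_of_mem_multiShadow hF hA j,
    fun A hA B hB hBA => ?_⟩
  simpa using update_mem_multiShadow_of_toColex_le hF hmono hA hB (j := j) (by simpa using hBA)

theorem stmt4 (n r d : ℕ) (hr : 1 ≤ r)
    (F : Set (Fin d → Finset ℕ)) (hF : ∀ S ∈ F, ∀ i, S i ∈ uniformOn n r)
    (hmono : IsMonotoneFamily n r d F) :
    IsMonotoneFamily n (r - 1) d (multiShadow d F) :=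
  stmt4_general n r d F hF hmono
end

section
/- Let r ≥ 2 be an integer. For every real x > r, LL_r is differentiable at C(x,r) and 1/LL_r'(C(x,r)) = (1/r)·(x − r + 1 + 1/(1/x + 1/(x−1) + ⋯ + 1/(x−r+2))). -/
/-- The generalized binomial coefficient `C(x, r) = x (x-1) ⋯ (x-r+1) / r!` for real `x`. -/
noncomputable def realChoose (x : ℝ) (r : ℕ) : ℝ :=
  (∏ i ∈ Finset.range r, (x - i)) / (Nat.factorial r : ℝ)

/-- The inverse on `[1, ∞)` of the increasing bijection `x ↦ C(x, r)` from `[r, ∞)` onto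
`[1, ∞)`. -/
noncomputable def invChoose (r : ℕ) (y : ℝ) : ℝ :=
  sSup {t : ℝ | (r : ℝ) ≤ t ∧ realChoose t r ≤ y}

/-- The function `LL_r`, defined by `LL_r(C(x, r)) = C(x, r-1)` for `x ≥ r`, and by
`LL_r(x) = r (x + ε (x - x²))` with `ε = 1/(1 + 1/2 + ⋯ + 1/r)` for `0 ≤ x ≤ 1`. -/
noncomputable def LLr (r : ℕ) (x : ℝ) : ℝ :=
  if 1 ≤ x then realChoose (invChoose r x) (r - 1)
  else (r : ℝ) * (x + (∑ i ∈ Finset.range r, (1 : ℝ) / (i + 1))⁻¹ * (x - x ^ 2))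

/-! For `t ≥ r` we have `LL_r (C(t, r)) = C(t, r-1)`, and `t ↦ C(t, r)` has nonzero derivative
at `x > r`, so by the inverse function theorem `LL_r'(C(x, r)) = C'(x, r-1) / C'(x, r)`.
Writing both derivatives logarithmically, `C'(t, k) = C(t, k) ∑_{i<k} 1/(t-i)`, and using
`C(x, r) = C(x, r-1) (x-r+1) / r`, the reciprocal of this ratio is the stated expression. -/

open Finset Filter Topology

theorem HasStrictDerivAt.hasDerivAt_of_eventually_comp_eq {f g h : ℝ → ℝ} {f' h' a : ℝ}
    (hf : HasStrictDerivAt f f' a) (hf' : f' ≠ 0) (hh : HasDerivAt h h' a)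
    (hgfh : ∀ᶠ t in 𝓝 a, g (f t) = h t) : HasDerivAt g (h' / f') (f a) := by
  set φ := hf.localInverse f f' a hf'
  have hφ : HasStrictDerivAt φ f'⁻¹ (f a) := hf.to_localInverse hf'
  have hφa : φ (f a) = a := (hf.eventually_left_inverse hf').self_of_nhds
  have hφ_tendsto : Tendsto φ (𝓝 (f a)) (𝓝 a) := by
    simpa only [hφa] using hφ.hasDerivAt.continuousAt.tendsto
  have hg : g =ᶠ[𝓝 (f a)] h ∘ φ := by
    filter_upwards [hf.eventually_right_inverse hf', hφ_tendsto.eventually hgfh] with y hfφ hgf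
    rw [Function.comp_apply, ← hgf, hfφ]
  rw [div_eq_mul_inv]
  exact (hh.comp_of_eq (f a) hφ.hasDerivAt hφa.symm).congr_of_eventuallyEq hg

namespace realChoose

theorem eq_descPochhammer_div (x : ℝ) (k : ℕ) :
    realChoose x k = (descPochhammer ℝ k).eval x / k.factorial := by
  rw [descPochhammer_eval_eq_prod_range, realChoose]

theorem succ (x : ℝ) (k : ℕ) : realChoose x (k + 1) = realChoose x k * (x - k) / (k + 1) := by
  simp only [realChoose, prod_range_succ, Nat.factorial_succ]
  push_cast
  field_simp

theorem self (k : ℕ) : realChoose k k = 1 := by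
  rw [eq_descPochhammer_div, descPochhammer_eval_eq_descFactorial, Nat.descFactorial_self,
    div_self (by positivity)]

theorem pos {x : ℝ} {k : ℕ} (hx : (k : ℝ) - 1 < x) : 0 < realChoose x k := by
  rw [eq_descPochhammer_div]
  exact div_pos (descPochhammer_pos hx) (by positivity)

theorem one_le {x : ℝ} {k : ℕ} (hx : (k : ℝ) ≤ x) : 1 ≤ realChoose x k := by
  have hk : (k : ℝ) - 1 ≤ k := by linarith
  rw [← self k, eq_descPochhammer_div, eq_descPochhammer_div]
  exact div_le_div_of_nonneg_right (monotoneOn_descPochhammer_eval k hk (hk.trans hx) hx)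
    (by positivity)

theorem strictMonoOn {k : ℕ} (hk : 1 ≤ k) :
    StrictMonoOn (realChoose · k) (Set.Ioi ((k : ℝ) - 1)) := by
  intro s hs t _ hst
  have hsi : ∀ i ∈ range k, 0 < s - i := fun i hi => by
    have : (i : ℝ) + 1 ≤ k := by exact_mod_cast mem_range.1 hi
    linarith [Set.mem_Ioi.1 hs]
  exact div_lt_div_of_pos_right
    (prod_lt_prod_of_nonempty hsi (fun i _ => by linarith) (nonempty_range_iff.2 (by omega)))
    (by positivity)

theorem hasStrictDerivAt {x : ℝ} {k : ℕ} (hx : ∀ i ∈ range k, x - i ≠ 0) :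
    HasStrictDerivAt (realChoose · k) (realChoose x k * ∑ i ∈ range k, 1 / (x - i)) x := by
  have hprod := HasStrictDerivAt.fun_finsetProd (u := range k) (f := fun (i : ℕ) (t : ℝ) => t - i)
    (fun i _ => (hasStrictDerivAt_id x).sub_const (i : ℝ))
  have hlog : ∑ i ∈ range k, (∏ j ∈ (range k).erase i, (x - j)) • (1 : ℝ) =
      (∏ i ∈ range k, (x - i)) * ∑ i ∈ range k, 1 / (x - i) := by
    rw [mul_sum]
    refine sum_congr rfl fun i hi => ?_
    rw [smul_eq_mul, mul_one, ← mul_prod_erase _ _ hi]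
    field_simp [hx i hi]
  refine (hprod.div_const (k.factorial : ℝ)).congr_deriv ?_
  rw [hlog, realChoose]
  ring

end realChoose

theorem invChoose_realChoose {r : ℕ} (hr : 1 ≤ r) {t : ℝ} (ht : (r : ℝ) ≤ t) :
    invChoose r (realChoose t r) = t := by
  have hmono := (realChoose.strictMonoOn hr).mono (Set.Ici_subset_Ioi.2 (sub_one_lt (r : ℝ)))
  refine IsGreatest.csSup_eq ⟨⟨ht, le_rfl⟩, fun s ⟨hs, hst⟩ => ?_⟩
  exact (hmono.le_iff_le hs ht).1 hst

theorem LLr_realChoose {r : ℕ} (hr : 1 ≤ r) {t : ℝ} (ht : (r : ℝ) ≤ t) :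
    LLr r (realChoose t r) = realChoose t (r - 1) := by
  rw [LLr, if_pos (realChoose.one_le ht), invChoose_realChoose hr ht]

theorem stmt7 (r : ℕ) (hr : 2 ≤ r) (x : ℝ) (hx : (r : ℝ) < x) :
    DifferentiableAt ℝ (LLr r) (realChoose x r) ∧
    1 / deriv (LLr r) (realChoose x r) =
      (1 / r) * (x - r + 1 + 1 / (∑ i ∈ Finset.range (r - 1), 1 / (x - i))) := by
  obtain ⟨k, rfl⟩ : ∃ k, r = k + 1 := ⟨r - 1, by omega⟩
  simp only [Nat.add_sub_cancel]
  push_cast at hx ⊢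
  have hxi : ∀ i ∈ range (k + 1), 0 < x - i := fun i hi => by
    have : (i : ℝ) ≤ k := by exact_mod_cast Nat.lt_succ_iff.1 (mem_range.1 hi)
    linarith
  have hxk : 0 < x - k := hxi k (self_mem_range_succ k)
  have hxi' : ∀ i ∈ range k, 0 < x - i := fun i hi => hxi i (range_subset_range.2 k.le_succ hi)
  have hS : 0 < ∑ i ∈ range k, 1 / (x - i) :=
    sum_pos (fun i hi => one_div_pos.2 (hxi' i hi)) (nonempty_range_iff.2 (by omega))
  have hCk : 0 < realChoose x k := realChoose.pos (by linarith)
  have hCk1 : 0 < realChoose x (k + 1) := realChoose.pos (by push_cast; linarith)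
  have hf := realChoose.hasStrictDerivAt fun i hi => (hxi i hi).ne'
  have hh := realChoose.hasStrictDerivAt fun i hi => (hxi' i hi).ne'
  have hf' : realChoose x (k + 1) * ∑ i ∈ range (k + 1), 1 / (x - i) ≠ 0 := by
    rw [sum_range_succ]
    positivity
  have hLL_comp : ∀ᶠ t in 𝓝 x, LLr (k + 1) (realChoose t (k + 1)) = realChoose t k := by
    filter_upwards [Ioi_mem_nhds hx] with t ht
    exact_mod_cast LLr_realChoose (by omega) (t := t) (by push_cast; exact ht.le)
  have hLL := hf.hasDerivAt_of_eventually_comp_eq hf' hh.hasDerivAt hLL_comp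
  refine ⟨hLL.differentiableAt, ?_⟩
  rw [hLL.deriv, realChoose.succ, sum_range_succ]
  field_simp
  ring
end

section
/- Let f : [0,∞) → [0,∞) be continuously differentiable, strictly increasing, concave, with f(0) = 0. Then for any a, b > 0, the map M ↦ area(f(M)) is continuous on the space of nonempty compact monotone subsets of [0,a] × [0,b] ⊆ ℝ² equipped with the Hausdorff distance. -/
open TopologicalSpace MeasureTheory Set Metric Filter Topology
open scoped ENNReal NNReal

/-!
If every point of `N ⊆ [0,A] × [0,B]` is within `δ` of a monotone set `M`, then every point of `N`
with both coordinates above `δ` lies in the translate `M + (δ, δ)`; so `N` is covered by that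
translate and two strips of width `δ`, and `area N ≤ area M + δ (A + B)`. Used in both directions,
this makes area continuous for the Hausdorff distance on monotone subsets of a fixed box.
The map `M ↦ f(M)` keeps monotone subsets of `[0,a] × [0,b]` monotone (intermediate value theorem,
`f 0 = 0`) inside `[0, f a] × [0, f b]`, and it is Hausdorff-continuous there because `f` is
uniformly continuous on `[0,a]` and `[0,b]`.
-/

def IsMonotoneSet (s : Set (ℝ × ℝ)) : Prop :=
  ∀ p ∈ s, ∀ q : ℝ × ℝ, 0 ≤ q.1 → 0 ≤ q.2 → q.1 ≤ p.1 → q.2 ≤ p.2 → q ∈ s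

theorem IsMonotoneSet.volume_le_add {M N : Set (ℝ × ℝ)} (hM : IsMonotoneSet M) {A B : ℝ}
    (hN : N ⊆ Icc (0, 0) (A, B)) {δ : ℝ≥0} (hNM : hausdorffEDist N M < δ) :
    volume N ≤ volume M + δ * (ENNReal.ofReal A + ENNReal.ofReal B) := by
  have hcover : N ⊆ ((· + (-(δ : ℝ), -(δ : ℝ))) ⁻¹' M ∪ Icc 0 (δ : ℝ) ×ˢ Icc 0 B) ∪
      Icc 0 A ×ˢ Icc 0 (δ : ℝ) := by
    intro p hp
    obtain ⟨q, hq, hpq⟩ := exists_edist_lt_of_hausdorffEDist_lt hp hNM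
    rw [edist_lt_coe, ← NNReal.coe_lt_coe, coe_nndist, Prod.dist_eq, max_lt_iff, Real.dist_eq,
      Real.dist_eq, abs_sub_lt_iff, abs_sub_lt_iff] at hpq
    obtain ⟨⟨hp1, hp2⟩, hpA, hpB⟩ := hN hp
    by_cases h1 : p.1 ≤ δ
    · exact Or.inl (Or.inr ⟨⟨hp1, h1⟩, hp2, hpB⟩)
    by_cases h2 : p.2 ≤ δ
    · exact Or.inr ⟨⟨hp1, hpA⟩, hp2, h2⟩
    refine Or.inl (Or.inl (hM q hq _ ?_ ?_ ?_ ?_)) <;> simp only [Prod.fst_add, Prod.snd_add] <;>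
      linarith
  calc volume N
      ≤ volume M + ENNReal.ofReal δ * ENNReal.ofReal B + ENNReal.ofReal A * ENNReal.ofReal δ := by
        refine (measure_mono hcover).trans <| (measure_union_le _ _).trans <|
          add_le_add ((measure_union_le _ _).trans (add_le_add ?_ ?_)) ?_
        · rw [measure_preimage_add_right]
        all_goals rw [Measure.volume_eq_prod, Measure.prod_prod, Real.volume_Icc, Real.volume_Icc]
        all_goals simp
    _ = volume M + δ * (ENNReal.ofReal A + ENNReal.ofReal B) := by
        rw [ENNReal.ofReal_coe_nnreal]; ring

theorem tendsto_volume_of_isMonotoneSet {ι : Type*} {l : Filter ι} {u : ι → Set (ℝ × ℝ)}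
    {M : Set (ℝ × ℝ)} {A B : ℝ} (hu : ∀ᶠ i in l, u i ⊆ Icc (0, 0) (A, B) ∧ IsMonotoneSet (u i))
    (hM : M ⊆ Icc (0, 0) (A, B)) (hMm : IsMonotoneSet M)
    (hlim : Tendsto (fun i => hausdorffEDist (u i) M) l (𝓝 0)) :
    Tendsto (fun i => volume (u i)) l (𝓝 (volume M)) := by
  have hMfin : volume M ≠ ∞ := ((measure_mono hM).trans_lt measure_Icc_lt_top).ne
  rw [ENNReal.tendsto_nhds hMfin]
  intro ε hε
  obtain ⟨δ, hδ, hδε⟩ := ENNReal.exists_nnreal_pos_mul_lt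
    (by finiteness : ENNReal.ofReal A + ENNReal.ofReal B ≠ ∞) hε.ne'
  filter_upwards [hu, hlim.eventually (gt_mem_nhds (ENNReal.coe_pos.2 hδ))] with i ⟨hui, huim⟩ hi
  refine ⟨tsub_le_iff_right.2 ?_, ?_⟩
  · rw [hausdorffEDist_comm] at hi
    exact (huim.volume_le_add hM hi).trans (by gcongr)
  · exact (hMm.volume_le_add hui hi).trans (by gcongr)

theorem UniformContinuousOn.tendsto_hausdorffEDist_image {α β ι : Type*} [PseudoEMetricSpace α]
    [PseudoEMetricSpace β] {g : α → β} {s t : Set α} (hg : UniformContinuousOn g s)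
    {l : Filter ι} {u : ι → Set α} (hu : ∀ᶠ i in l, u i ⊆ s) (ht : t ⊆ s)
    (hlim : Tendsto (fun i => hausdorffEDist (u i) t) l (𝓝 0)) :
    Tendsto (fun i => hausdorffEDist (g '' u i) (g '' t)) l (𝓝 0) := by
  rw [ENNReal.tendsto_nhds_zero]
  intro ε hε
  obtain ⟨δ, hδ, hgδ⟩ := EMetric.uniformContinuousOn_iff.1 hg ε hε
  filter_upwards [hu, hlim.eventually (gt_mem_nhds hδ)] with i hus hi
  refine hausdorffEDist_le_of_mem_edist ?_ ?_
  · rintro _ ⟨p, hp, rfl⟩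
    obtain ⟨q, hq, hpq⟩ := exists_edist_lt_of_hausdorffEDist_lt hp hi
    exact ⟨g q, mem_image_of_mem g hq, (hgδ (hus hp) (ht hq) hpq).le⟩
  · rintro _ ⟨q, hq, rfl⟩
    rw [hausdorffEDist_comm] at hi
    obtain ⟨p, hp, hqp⟩ := exists_edist_lt_of_hausdorffEDist_lt hq hi
    exact ⟨g p, mem_image_of_mem g hp, (hgδ (ht hq) (hus hp) hqp).le⟩

theorem IsMonotoneSet.image_prodMap {s : Set (ℝ × ℝ)} (hs : IsMonotoneSet s)
    (hs0 : s ⊆ Ici (0, 0)) {f : ℝ → ℝ} (hf0 : f 0 = 0) (hf : ContinuousOn f (Ici 0)) :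
    IsMonotoneSet (Prod.map f f '' s) := by
  rintro _ ⟨p, hp, rfl⟩ q hq1 hq2 hqp1 hqp2
  obtain ⟨hp1, hp2⟩ := hs0 hp
  obtain ⟨x, hx, hfx⟩ := intermediate_value_Icc hp1 (hf.mono Icc_subset_Ici_self)
    (⟨by rwa [hf0], hqp1⟩ : q.1 ∈ Icc (f 0) (f p.1))
  obtain ⟨y, hy, hfy⟩ := intermediate_value_Icc hp2 (hf.mono Icc_subset_Ici_self)
    (⟨by rwa [hf0], hqp2⟩ : q.2 ∈ Icc (f 0) (f p.2))
  exact ⟨(x, y), hs p hp _ hx.1 hy.1 hx.2 hy.2, Prod.ext hfx hfy⟩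

theorem mapsTo_prodMap_Icc {f : ℝ → ℝ} (hf0 : f 0 = 0) (hf : MonotoneOn f (Ici 0)) (a b : ℝ) :
    MapsTo (Prod.map f f) (Icc (0, 0) (a, b)) (Icc (0, 0) (f a, f b)) := by
  rintro p ⟨⟨hp1, hp2⟩, hpa, hpb⟩
  refine ⟨⟨?_, ?_⟩, ?_, ?_⟩
  · exact hf0 ▸ hf self_mem_Ici hp1 hp1
  · exact hf0 ▸ hf self_mem_Ici hp2 hp2
  · exact hf hp1 (hp1.trans hpa) hpa
  · exact hf hp2 (hp2.trans hpb) hpb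

theorem stmt17_general (f : ℝ → ℝ)
    (hf0 : f 0 = 0)
    (hC1 : ContDiffOn ℝ 1 f (Set.Ici 0))
    (hmono : StrictMonoOn f (Set.Ici 0))
    (a b : ℝ) :
    ContinuousOn (fun K : NonemptyCompacts (ℝ × ℝ) => volume (Prod.map f f '' (K : Set (ℝ × ℝ))))
      {K : NonemptyCompacts (ℝ × ℝ) |
        (K : Set (ℝ × ℝ)) ⊆ Set.Icc ((0, 0) : ℝ × ℝ) (a, b) ∧
        ∀ p ∈ (K : Set (ℝ × ℝ)), ∀ q : ℝ × ℝ,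
          0 ≤ q.1 → 0 ≤ q.2 → q.1 ≤ p.1 → q.2 ≤ p.2 → q ∈ (K : Set (ℝ × ℝ))} := by
  have hfc : ContinuousOn f (Ici 0) := hC1.continuousOn
  have hF : UniformContinuousOn (Prod.map f f) (Icc (0, 0) (a, b)) :=
    isCompact_Icc.uniformContinuousOn_of_continuous
      ((hfc.prodMap hfc).mono fun p hp => ⟨hp.1.1, hp.1.2⟩)
  have himage : ∀ K : Set (ℝ × ℝ), K ⊆ Icc (0, 0) (a, b) → IsMonotoneSet K →
      Prod.map f f '' K ⊆ Icc (0, 0) (f a, f b) ∧ IsMonotoneSet (Prod.map f f '' K) :=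
    fun K hK hKm => ⟨(mapsTo_prodMap_Icc hf0 hmono.monotoneOn a b).mono_left hK |>.image_subset,
      hKm.image_prodMap (hK.trans Icc_subset_Ici_self) hf0 hfc⟩
  rintro K₀ ⟨hK₀, hK₀m⟩
  refine tendsto_volume_of_isMonotoneSet ?_ (himage K₀ hK₀ hK₀m).1 (himage K₀ hK₀ hK₀m).2 ?_
  · filter_upwards [self_mem_nhdsWithin] with K ⟨hK, hKm⟩ using himage K hK hKm
  · refine hF.tendsto_hausdorffEDist_image (eventually_nhdsWithin_of_forall fun K hK => hK.1) hK₀ ?_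
    have hedist : Tendsto (fun K => edist K K₀) (𝓝 K₀) (𝓝 0) :=
      (continuous_id.edist continuous_const).tendsto' K₀ 0 (edist_self K₀)
    exact tendsto_nhdsWithin_of_tendsto_nhds hedist

/-- On the space of nonempty compact monotone subsets of `[0,a] × [0,b] ⊆ ℝ²` equipped with
the Hausdorff distance, the map `M ↦ area (f(M))` is continuous. -/
theorem stmt17 (f : ℝ → ℝ)
    (hf0 : f 0 = 0) (hfnn : ∀ x : ℝ, 0 ≤ x → 0 ≤ f x)
    (hC1 : ContDiffOn ℝ 1 f (Set.Ici 0))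
    (hmono : StrictMonoOn f (Set.Ici 0))
    (hconc : ConcaveOn ℝ (Set.Ici 0) f)
    (a b : ℝ) (ha : 0 < a) (hb : 0 < b) :
    ContinuousOn (fun K : NonemptyCompacts (ℝ × ℝ) => volume (Prod.map f f '' (K : Set (ℝ × ℝ))))
      {K : NonemptyCompacts (ℝ × ℝ) |
        (K : Set (ℝ × ℝ)) ⊆ Set.Icc ((0, 0) : ℝ × ℝ) (a, b) ∧
        ∀ p ∈ (K : Set (ℝ × ℝ)), ∀ q : ℝ × ℝ,
          0 ≤ q.1 → 0 ≤ q.2 → q.1 ≤ p.1 → q.2 ≤ p.2 → q ∈ (K : Set (ℝ × ℝ))} :=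
  stmt17_general f hf0 hC1 hmono a b
end
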